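/- If in triangle ABC the cevians AA₁ and BB₁ (with A₁ on line BC, B₁ on line AC) are equal in length and intersect at a point lying on the internal bisector of angle C, then AC = BC, i.e., the triangle is isosceles. -/
import Mathlib


open EuclideanGeometry Real

noncomputable section

open scoped RealInnerProductSpace

/-- The Euclidean plane. -/
abbrev Pt : Type := EuclideanSpace ℝ (Fin 2)

set_option maxHeartbeats 1000000 in
private lemma key_alg (a b c p q s t : ℝ) (ha : 0 < a) (hb : 0 < b) (hc : c < a * b)
    (hs0 : 0 ≤ s) (hs1 : s ≤ 1) (ht0 : 0 ≤ t) (ht1 : t ≤ 1)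
    (hp0 : p ≠ 0) (hp1 : p ≠ 1) (hq0 : q ≠ 0) (hq1 : q ≠ 1)
    (e1 : s * p = 1 - t) (e2 : t * q = 1 - s)
    (e3 : (1 - s) * b = (1 - t) * a)
    (e4 : b ^ 2 - 2 * p * c + p ^ 2 * a ^ 2 = a ^ 2 - 2 * q * c + q ^ 2 * b ^ 2) :
    b = a := by
  have hsne : s ≠ 0 := by
    intro h
    rw [h] at e1 e2
    have ht' : t = 1 := by nlinarith
    rw [ht'] at e2
    exact hq1 (by linarith)
  have htne : t ≠ 0 := by
    intro h
    rw [h] at e1 e2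
    have hs' : s = 1 := by nlinarith
    rw [hs'] at e1
    exact hp1 (by linarith)
  have hsne1 : s ≠ 1 := by
    intro h
    rw [h] at e2
    have : t * q = 0 := by linarith
    rcases mul_eq_zero.mp this with h' | h'
    · exact htne h'
    · exact hq0 h'
  have htne1 : t ≠ 1 := by
    intro h
    rw [h] at e1
    have : s * p = 0 := by linarith
    rcases mul_eq_zero.mp this with h' | h'
    · exact hsne h'
    · exact hp0 h'
  have hspos : 0 < s := lt_of_le_of_ne hs0 (Ne.symm hsne)
  have htpos : 0 < t := lt_of_le_of_ne ht0 (Ne.symm htne)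
  have hslt : s < 1 := lt_of_le_of_ne hs1 hsne1
  have htlt : t < 1 := lt_of_le_of_ne ht1 htne1
  have hst : s + t ≠ 1 := by
    intro h
    apply hp1
    have h' : s * p = s * 1 := by rw [e1]; linarith
    exact mul_left_cancel₀ hsne h'
  have key : (t - s) * (b^2*( t - 2*t^2 + t^3 + s - 4*s*t + 5*s*t^2 - 2*s*t^3 - 2*s^2 + 5*s^2*t - 6*s^2*t^2 + 2*s^2*t^3 + s^3 - 2*s^3*t + 2*s^3*t^2 ) + c*( -2*s*t + 6*s*t^2 - 6*s*t^3 + 2*s*t^4 + 2*s^2*t - 4*s^2*t^2 + 2*s^2*t^3 )) = 0 := by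
    linear_combination (s^2*t^2*(1-t)^2) * e4
      - (-2*c*s*t^2*(1-t)^2 + t^2*(1-t)^2*a^2*(s*p+(1-t))) * e1
      - (2*c*s^2*t*(1-t)^2 - s^2*(1-t)^2*b^2*(t*q+(1-s))) * e2
      - (((1-t)*a+(1-s)*b)*(s^2*t^2 - t^2*(1-t)^2)) * e3
  have h6 : a*b*(1-t) = (1-s)*b^2 := by linear_combination (-b) * e3
  have h5 : c * (1 - t) < (1 - s) * b^2 := by
    have := mul_lt_mul_of_pos_right hc (show (0:ℝ) < 1 - t by linarith)
    linarith
  have hune : (1 : ℝ) - s - t ≠ 0 := by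
    intro h; apply hst; linarith
  have husq : 0 < (1 - s - t)^2 := lt_of_le_of_ne (sq_nonneg _) (Ne.symm (pow_ne_zero 2 hune))
  have hG2 : 0 < s*(1-s) + t*(1-t) - 4*(s*(1-s))*(t*(1-t)) := by
    have hA4 : s*(1-s) ≤ 1/4 := by nlinarith [sq_nonneg (1-2*s)]
    have hBpos : 0 < t*(1-t) := mul_pos htpos (by linarith)
    have hApos : 0 < s*(1-s) := mul_pos hspos (by linarith)
    nlinarith [mul_nonneg (by linarith : (0:ℝ) ≤ 1/4 - s*(1-s)) (le_of_lt hBpos)]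
  have hM : 0 < 2*s*t*(1-t)*(1-s-t)^2 := by
    have h2st : 0 < 2*s*t*(1-t) := by
      nlinarith [mul_pos (mul_pos hspos htpos) (show (0:ℝ) < 1-t by linarith)]
    exact mul_pos h2st husq
  have hWpos : 0 < (1 - s - t) * (b^2*( t - 2*t^2 + t^3 + s - 4*s*t + 5*s*t^2 - 2*s*t^3 - 2*s^2 + 5*s^2*t - 6*s^2*t^2 + 2*s^2*t^3 + s^3 - 2*s^3*t + 2*s^3*t^2 ) + c*( -2*s*t + 6*s*t^2 - 6*s*t^3 + 2*s*t^4 + 2*s^2*t - 4*s^2*t^2 + 2*s^2*t^3 )) := by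
    have hWeq : (1-s-t) * (b^2*( t - 2*t^2 + t^3 + s - 4*s*t + 5*s*t^2 - 2*s*t^3 - 2*s^2 + 5*s^2*t - 6*s^2*t^2 + 2*s^2*t^3 + s^3 - 2*s^3*t + 2*s^3*t^2 ) + c*( -2*s*t + 6*s*t^2 - 6*s*t^3 + 2*s*t^4 + 2*s^2*t - 4*s^2*t^2 + 2*s^2*t^3 ))
        = b^2*(1-s-t)^2*(s*(1-s) + t*(1-t) - 4*(s*(1-s))*(t*(1-t)))
          + 2*s*t*(1-t)*(1-s-t)^2*((1-s)*b^2 - c*(1-t)) := by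
      ring
    rw [hWeq]
    have t1 : 0 < b^2*(1-s-t)^2*(s*(1-s) + t*(1-t) - 4*(s*(1-s))*(t*(1-t))) :=
      mul_pos (mul_pos (by positivity) husq) hG2
    have t2 : 0 < 2*s*t*(1-t)*(1-s-t)^2*((1-s)*b^2 - c*(1-t)) :=
      mul_pos hM (by linarith)
    linarith
  have hts : t = s := by
    rcases mul_eq_zero.mp key with h | h
    · linarith [sub_eq_zero.mp h]
    · rw [h, mul_zero] at hWpos
      exact absurd hWpos (lt_irrefl 0)
  rw [hts] at e3
  exact mul_left_cancel₀ (by intro h; apply hsne1; linarith : (1:ℝ) - s ≠ 0) e3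

set_option maxHeartbeats 1000000 in
/-- If equal cevians `AA₁` and `BB₁` of triangle `ABC` intersect at a point on the
internal bisector (line) of angle `C`, then `AC = BC`. -/
theorem steiner_lehmus_bisector (A B C A₁ B₁ O : Pt)
    (hABC : AffineIndependent ℝ ![A, B, C])
    (hA₁ : A₁ ∈ affineSpan ℝ ({B, C} : Set Pt)) (hA₁B : A₁ ≠ B) (hA₁C : A₁ ≠ C)
    (hB₁ : B₁ ∈ affineSpan ℝ ({A, C} : Set Pt)) (hB₁A : B₁ ≠ A) (hB₁C : B₁ ≠ C)
    (hlen : dist A A₁ = dist B B₁)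
    (hO₁ : O ∈ segment ℝ A A₁) (hO₂ : O ∈ segment ℝ B B₁)
    (hbis : ∠ A C O = ∠ B C O) :
    dist A C = dist B C := by
  set u : Pt := A - C with hu_def
  set v : Pt := B - C with hv_def
  have hind : ∀ x y : ℝ, x • u + y • v = 0 → x = 0 ∧ y = 0 := by
    intro x y hxy
    have hsum : Finset.univ.sum ![x, y, -x - y] = 0 := by
      simp [Fin.sum_univ_three]
    have hcomb : ∑ e ∈ Finset.univ, ![x, y, -x - y] e • ![A, B, C] e = (0 : Pt) := by
      rw [Fin.sum_univ_three]
      simp only [Matrix.cons_val_zero, Matrix.cons_val_one, Matrix.head_cons,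
        Matrix.cons_val_two, Matrix.tail_cons]
      have : x • A + y • B + (-x - y) • C = x • u + y • v := by
        rw [hu_def, hv_def]; module
      rw [this, hxy]
    have h := affineIndependent_iff.mp hABC Finset.univ ![x, y, -x - y] hsum hcomb
    exact ⟨by simpa using h 0 (Finset.mem_univ _), by simpa using h 1 (Finset.mem_univ _)⟩
  have hu0 : u ≠ 0 := by
    intro h
    have := (hind 1 0 (by rw [h]; simp)).1
    norm_num at this
  have hv0 : v ≠ 0 := by
    intro h
    have := (hind 0 1 (by rw [h]; simp)).2
    norm_num at this
  set b : ℝ := ‖u‖ with hb_def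
  set a : ℝ := ‖v‖ with ha_def
  set c : ℝ := ⟪u, v⟫ with hc_def
  have hb : 0 < b := norm_pos_iff.mpr hu0
  have ha : 0 < a := norm_pos_iff.mpr hv0
  have hc : c < a * b := by
    have : c < b * a := by
      rw [hc_def, hb_def, ha_def]
      apply inner_lt_norm_mul_iff_real.mpr
      intro h
      have h0 : ‖v‖ • u + (-‖u‖) • v = 0 := by
        rw [neg_smul, h]; abel
      have := (hind _ _ h0).1
      exact hv0 (norm_eq_zero.mp this)
    linarith [this, mul_comm b a]
  -- A₁ on line BC
  obtain ⟨p, hp⟩ : ∃ r : ℝ, r • (B - C) = A₁ - C := by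
    have h := hA₁
    rw [show A₁ = (A₁ -ᵥ C) +ᵥ C from (vsub_vadd _ _).symm] at h
    obtain ⟨r, hr⟩ := vadd_right_mem_affineSpan_pair.mp h
    exact ⟨r, by simpa [vsub_eq_sub] using hr⟩
  have hp0 : p ≠ 0 := by
    rintro rfl
    apply hA₁C
    have : A₁ - C = 0 := by rw [← hp, zero_smul]
    rwa [sub_eq_zero] at this
  have hp1 : p ≠ 1 := by
    rintro rfl
    apply hA₁B
    rw [one_smul] at hp
    have := congrArg (· + C) hp
    simpa using this.symm
  -- B₁ on line AC
  obtain ⟨q, hq⟩ : ∃ r : ℝ, r • (A - C) = B₁ - C := by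
    have h := hB₁
    rw [show B₁ = (B₁ -ᵥ C) +ᵥ C from (vsub_vadd _ _).symm] at h
    obtain ⟨r, hr⟩ := vadd_right_mem_affineSpan_pair.mp h
    exact ⟨r, by simpa [vsub_eq_sub] using hr⟩
  have hq0 : q ≠ 0 := by
    rintro rfl
    apply hB₁C
    have : B₁ - C = 0 := by rw [← hq, zero_smul]
    rwa [sub_eq_zero] at this
  have hq1 : q ≠ 1 := by
    rintro rfl
    apply hB₁A
    rw [one_smul] at hq
    have := congrArg (· + C) hq
    simpa using this.symm
  -- O on the segments
  obtain ⟨s₀, s, hs₀, hs0, hsum1, hOA⟩ := hO₁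
  obtain ⟨t₀, t, ht₀, ht0, hsum2, hOB⟩ := hO₂
  have hs1 : s ≤ 1 := by linarith
  have ht1 : t ≤ 1 := by linarith
  have hs₀' : s₀ = 1 - s := by linarith
  have ht₀' : t₀ = 1 - t := by linarith
  rw [hs₀'] at hOA
  rw [ht₀'] at hOB
  have hA1 : A₁ = p • (B - C) + C := (sub_eq_iff_eq_add.mp hp.symm)
  have hB1 : B₁ = q • (A - C) + C := (sub_eq_iff_eq_add.mp hq.symm)
  have hw1 : O - C = (1 - s) • u + (s * p) • v := by
    rw [← hOA, hA1, hu_def, hv_def]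
    module
  have hw2 : O - C = (t * q) • u + (1 - t) • v := by
    rw [← hOB, hB1, hu_def, hv_def]
    module
  have hmatch : (1 - s) • u + (s * p) • v = (t * q) • u + (1 - t) • v :=
    hw1.symm.trans hw2
  obtain ⟨e2', e1'⟩ := hind ((1 - s) - t * q) (s * p - (1 - t))
    (by linear_combination (norm := module) hmatch)
  have e1 : s * p = 1 - t := by linarith
  have e2 : t * q = 1 - s := by linarith
  -- O ≠ C
  have hw0 : O - C ≠ 0 := by
    intro h
    obtain ⟨h1, h2⟩ := hind (1 - s) (s * p) (by rw [← hw1, h])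
    have hs' : s = 1 := by linarith
    rw [hs'] at h2
    exact hp0 (by linarith)
  -- bisector condition
  have hcos := congrArg Real.cos hbis
  rw [EuclideanGeometry.angle, EuclideanGeometry.angle,
    InnerProductGeometry.cos_angle, InnerProductGeometry.cos_angle] at hcos
  simp only [vsub_eq_sub] at hcos
  have hiu : ⟪u, O - C⟫ = t * q * b ^ 2 + (1 - t) * c := by
    rw [hw2, inner_add_right, real_inner_smul_right, real_inner_smul_right,
      real_inner_self_eq_norm_sq, ← hc_def, ← hb_def]
  have hiv : ⟪v, O - C⟫ = t * q * c + (1 - t) * a ^ 2 := by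
    rw [hw2, inner_add_right, real_inner_smul_right, real_inner_smul_right,
      real_inner_self_eq_norm_sq, real_inner_comm u v, ← hc_def, ← ha_def]
  have hnw : ‖O - C‖ ≠ 0 := norm_ne_zero_iff.mpr hw0
  have hnwpos : 0 < ‖O - C‖ := norm_pos_iff.mpr hw0
  have hbis2 : a * ⟪u, O - C⟫ = b * ⟪v, O - C⟫ := by
    rw [← hu_def, ← hv_def, ← hb_def, ← ha_def] at hcos
    have hbn : (0:ℝ) < b * ‖O - C‖ := mul_pos hb hnwpos
    have han : (0:ℝ) < a * ‖O - C‖ := mul_pos ha hnwpos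
    have hcross := (div_eq_div_iff (ne_of_gt hbn) (ne_of_gt han)).mp hcos
    have hcross2 : (⟪u, O - C⟫ * a) * ‖O - C‖ = (⟪v, O - C⟫ * b) * ‖O - C‖ := by
      linear_combination hcross
    have := mul_right_cancel₀ (ne_of_gt hnwpos) hcross2
    linear_combination this
  have hbis3 : a * (t * q * b ^ 2 + (1 - t) * c) = b * (t * q * c + (1 - t) * a ^ 2) := by
    rw [← hiu, ← hiv]; exact hbis2
  have hfac : (b * a - c) * (t * q * b - (1 - t) * a) = 0 := by linear_combination hbis3
  have e3 : (1 - s) * b = (1 - t) * a := by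
    rcases mul_eq_zero.mp hfac with h | h
    · exfalso
      have hmm : b * a = a * b := mul_comm b a
      linarith
    · have h' : t * q * b = (1 - t) * a := by linarith
      rw [← e2]
      linarith
  -- lengths
  have hAA : A - A₁ = u - p • v := by rw [hA1, hu_def, hv_def]; module
  have hBB : B - B₁ = v - q • u := by rw [hB1, hu_def, hv_def]; module
  have hd1 : (dist A A₁) ^ 2 = b ^ 2 - 2 * p * c + p ^ 2 * a ^ 2 := by
    rw [dist_eq_norm, hAA, ← real_inner_self_eq_norm_sq]
    simp only [inner_sub_left, inner_sub_right, real_inner_smul_left, real_inner_smul_right,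
      real_inner_self_eq_norm_sq, real_inner_comm u v, ← hc_def, ← hb_def, ← ha_def,
      norm_smul, Real.norm_eq_abs, mul_pow, sq_abs]
    ring
  have hd2 : (dist B B₁) ^ 2 = a ^ 2 - 2 * q * c + q ^ 2 * b ^ 2 := by
    rw [dist_eq_norm, hBB, ← real_inner_self_eq_norm_sq]
    simp only [inner_sub_left, inner_sub_right, real_inner_smul_left, real_inner_smul_right,
      real_inner_self_eq_norm_sq, real_inner_comm u v, ← hc_def, ← hb_def, ← ha_def,
      norm_smul, Real.norm_eq_abs, mul_pow, sq_abs]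
    ring
  have e4 : b ^ 2 - 2 * p * c + p ^ 2 * a ^ 2 = a ^ 2 - 2 * q * c + q ^ 2 * b ^ 2 := by
    rw [← hd1, ← hd2, hlen]
  have hfin : b = a :=
    key_alg a b c p q s t ha hb hc hs0 hs1 ht0 ht1 hp0 hp1 hq0 hq1 e1 e2 e3 e4
  rw [dist_eq_norm, dist_eq_norm, ← hu_def, ← hv_def, ← hb_def, ← ha_def, hfin]
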